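/- arXiv:2304.04555 — 2 statements merged into one kernel-verified Lean document; each statement's English description precedes it below -/
import Mathlib

section
/- The derivative of a B-spline curve of order k is a B-spline curve of order k-1 with coefficients given by scaled differences: on [t_r, t_s], D(Σ_{j=r-k+1}^{s-1} α_j B_{j,k,t}) = Σ_{j=r-k+2}^{s-1} (k-1)·(α_j - α_{j-1})/(t_{j+k-1} - t_j) · B_{j,k-1,t}. -/
/-!
Differentiating the Cox–de Boor recursion and inducting on the order gives, away from the
knots, `D B_{j,k} = (k-1) (B_{j,k-1} / (t_{j+k-1} - t_j) - B_{j+1,k-1} / (t_{j+k} - t_{j+1}))`.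
Summing against `α` and summing by parts turns this into the stated formula, the two boundary
terms vanishing because `B_{j,k-1}` is supported in `[t_j, t_{j+k-1})`.
-/

/-- Cox–de Boor recursion: `Bspl t k j` is the `j`-th non-uniform B-spline of
order `k` for the knot sequence `t` (order 1 is the indicator of `[t j, t (j+1))`). -/
noncomputable def Bspl (t : ℤ → ℝ) : ℕ → ℤ → ℝ → ℝ
  | 0, _, _ => 0
  | 1, j, x => if t j ≤ x ∧ x < t (j + 1) then 1 else 0
  | (k + 2), j, x =>
      (x - t j) / (t (j + (k : ℤ) + 1) - t j) * Bspl t (k + 1) j x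
      + (t (j + (k : ℤ) + 2) - x) / (t (j + (k : ℤ) + 2) - t (j + 1)) * Bspl t (k + 1) (j + 1) x

open Filter Topology Finset

theorem sum_Icc_by_parts_of_eq_zero {R : Type*} [CommRing R] (α g : ℤ → R) {a b : ℤ}
    (ha : g a = 0) (hb : g (b + 1) = 0) :
    ∑ j ∈ Icc a b, α j * (g j - g (j + 1)) = ∑ j ∈ Icc (a + 1) b, (α j - α (j - 1)) * g j := by
  have shift : ∑ j ∈ Icc a b, α j * g (j + 1) = ∑ j ∈ Icc (a + 1) (b + 1), α (j - 1) * g j := by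
    apply Finset.sum_nbij' (· + 1) (· - 1) <;> intro j hj <;> simp_all
  have drop_bot : ∑ j ∈ Icc a b, α j * g j = ∑ j ∈ Icc (a + 1) b, α j * g j := by
    refine (Finset.sum_subset (Icc_subset_Icc_left (by omega)) fun j hj hj' => ?_).symm
    obtain rfl : j = a := by simp only [mem_Icc] at hj hj'; omega
    simp [ha]
  have drop_top : ∑ j ∈ Icc (a + 1) (b + 1), α (j - 1) * g j
      = ∑ j ∈ Icc (a + 1) b, α (j - 1) * g j := by
    refine (Finset.sum_subset (Icc_subset_Icc_right (by omega)) fun j hj hj' => ?_).symm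
    obtain rfl : j = b + 1 := by simp only [mem_Icc] at hj hj'; omega
    simp [hb]
  simp only [mul_sub, sub_mul, sum_sub_distrib, shift, drop_bot, drop_top]

theorem Bspl_eq_zero_of_notMem_Ico {t : ℤ → ℝ} (ht : Monotone t) (m : ℕ) {j : ℤ} {x : ℝ}
    (hx : x ∉ Set.Ico (t j) (t (j + m))) : Bspl t m j x = 0 := by
  induction m generalizing j with
  | zero => rfl
  | succ m ih =>
    rcases m with _ | k
    · simpa [Bspl] using hx
    · have hj : x ∉ Set.Ico (t j) (t (j + (k + 1 : ℕ))) := fun h =>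
        hx ⟨h.1, h.2.trans_le (ht (by omega))⟩
      have hj' : x ∉ Set.Ico (t (j + 1)) (t (j + 1 + (k + 1 : ℕ))) := fun h =>
        hx ⟨(ht (by omega)).trans h.1, h.2.trans_le (ht (by omega))⟩
      simp only [Bspl, ih hj, ih hj', mul_zero, add_zero]

theorem Bspl_one_eventuallyEq {t : ℤ → ℝ} {j : ℤ} {x : ℝ} (hj : x ≠ t j) (hj' : x ≠ t (j + 1)) :
    Bspl t 1 j =ᶠ[𝓝 x] fun _ => Bspl t 1 j x := by
  by_cases hx : x ∈ Set.Ioo (t j) (t (j + 1))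
  · filter_upwards [isOpen_Ioo.mem_nhds hx] with y hy
    simp [Bspl, hy.1.le, hy.2, hx.1.le, hx.2]
  · have hx' : x ∈ (Set.Icc (t j) (t (j + 1)))ᶜ := fun h =>
      hx ⟨lt_of_le_of_ne h.1 hj.symm, lt_of_le_of_ne h.2 hj'⟩
    have hzero : ∀ z ∈ (Set.Icc (t j) (t (j + 1)))ᶜ, Bspl t 1 j z = 0 := fun z hz => by
      simp only [Bspl, ite_eq_right_iff]
      exact fun h => absurd ⟨h.1, h.2.le⟩ hz
    filter_upwards [isClosed_Icc.isOpen_compl.mem_nhds hx'] with y hy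
    rw [hzero y hy, hzero x hx']

theorem hasDerivAt_Bspl {t : ℤ → ℝ} (ht : StrictMono t) (k : ℕ) (j : ℤ) {x : ℝ}
    (hx : ∀ i, x ≠ t i) :
    HasDerivAt (Bspl t (k + 2) j)
      ((k + 1) * Bspl t (k + 1) j x / (t (j + k + 1) - t j)
        - (k + 1) * Bspl t (k + 1) (j + 1) x / (t (j + 1 + k + 1) - t (j + 1))) x := by
  have hω (a b : ℝ) : HasDerivAt (fun y => (y - a) / b) (1 / b) x :=
    ((hasDerivAt_id x).sub_const a).div_const b
  have hω' (a b : ℝ) : HasDerivAt (fun y => (a - y) / b) (-1 / b) x := by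
    simpa using ((hasDerivAt_id x).const_sub a).div_const b
  induction k generalizing j with
  | zero =>
    have hloc : Bspl t 2 j =ᶠ[𝓝 x] fun y => (y - t j) / (t (j + 1) - t j) * Bspl t 1 j x
        + (t (j + 2) - y) / (t (j + 2) - t (j + 1)) * Bspl t 1 (j + 1) x := by
      filter_upwards [Bspl_one_eventuallyEq (hx j) (hx (j + 1)),
        Bspl_one_eventuallyEq (hx (j + 1)) (hx (j + 1 + 1))] with y h h'
      rw [Bspl.eq_3, h, h']
      norm_num [add_assoc]
    refine (((hω _ _).mul_const _).add ((hω' _ _).mul_const _)).congr_of_eventuallyEq hloc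
      |>.congr_deriv ?_
    ring_nf
  | succ k ih =>
    refine (((hω _ _).mul (ih j)).add ((hω' _ _).mul (ih (j + 1)))).congr_deriv ?_
    -- After expanding `B_{j,k+2}` and `B_{j+1,k+2}` by the recursion, the coefficients of
    -- `B_{j+1,k+1}` cancel because `(x - t_j) + (t_{j+k+2} - x) = t_{j+k+2} - t_j` and
    -- `(t_{j+k+3} - x) + (x - t_{j+1}) = t_{j+k+3} - t_{j+1}`.
    have h₁ : t (j + k + 2) - t j ≠ 0 := sub_ne_zero.2 (ht (by omega)).ne'
    have h₂ : t (j + k + 3) - t (j + 1) ≠ 0 := sub_ne_zero.2 (ht (by omega)).ne'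
    simp only [Bspl]
    push_cast
    ring_nf at h₁ h₂ ⊢
    field_simp
    ring

theorem stmt5_general (t : ℤ → ℝ) (ht : StrictMono t) (k : ℕ) (hk : 3 ≤ k) (r s : ℤ)
    (α : ℤ → ℝ) (x : ℝ) (hx : x ∈ Set.Ioo (t r) (t s))
    (hknot : ∀ j : ℤ, x ≠ t j) :
    deriv (fun y => ∑ j ∈ Finset.Icc (r - (k : ℤ) + 1) (s - 1), α j * Bspl t k j y) x
      = ∑ j ∈ Finset.Icc (r - (k : ℤ) + 2) (s - 1),
          ((k : ℝ) - 1) * (α j - α (j - 1)) / (t (j + (k : ℤ) - 1) - t j)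
            * Bspl t (k - 1) j x := by
  obtain ⟨n, rfl⟩ : ∃ n, k = n + 2 := ⟨k - 2, by omega⟩
  set g : ℤ → ℝ := fun i => (n + 1) * Bspl t (n + 1) i x / (t (i + n + 1) - t i)
  have hderiv := HasDerivAt.fun_sum (u := Icc (r - ((n + 2 : ℕ) : ℤ) + 1) (s - 1))
    fun j _ => (hasDerivAt_Bspl ht n j hknot).const_mul (α j)
  have hg_bot : g (r - ((n + 2 : ℕ) : ℤ) + 1) = 0 := by
    have hr : r - ((n + 2 : ℕ) : ℤ) + 1 + (n + 1 : ℕ) = r := by push_cast; ring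
    simp only [g, Bspl_eq_zero_of_notMem_Ico ht.monotone _ fun h => h.2.not_ge (hr ▸ hx.1.le),
      mul_zero, zero_div]
  have hg_top : g (s - 1 + 1) = 0 := by
    simp only [g, sub_add_cancel, Bspl_eq_zero_of_notMem_Ico ht.monotone _ fun h => h.1.not_gt hx.2,
      mul_zero, zero_div]
  rw [hderiv.deriv, sum_Icc_by_parts_of_eq_zero α g hg_bot hg_top]
  refine Finset.sum_congr (by congr 1; ring) fun j _ => ?_
  simp only [g]
  push_cast
  ring_nf

/-- Derivative of a B-spline curve of order `k` is a B-spline curve of order `k-1`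
with scaled-difference coefficients, on the interior of `[t r, t s]` away from knots. -/
theorem stmt5 (t : ℤ → ℝ) (ht : StrictMono t) (k : ℕ) (hk : 3 ≤ k) (r s : ℤ)
    (hrs : r + (k : ℤ) ≤ s) (α : ℤ → ℝ) (x : ℝ) (hx : x ∈ Set.Ioo (t r) (t s))
    (hknot : ∀ j : ℤ, x ≠ t j) :
    deriv (fun y => ∑ j ∈ Finset.Icc (r - (k : ℤ) + 1) (s - 1), α j * Bspl t k j y) x
      = ∑ j ∈ Finset.Icc (r - (k : ℤ) + 2) (s - 1),
          ((k : ℝ) - 1) * (α j - α (j - 1)) / (t (j + (k : ℤ) - 1) - t j)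
            * Bspl t (k - 1) j x :=
  stmt5_general t ht k hk r s α x hx hknot
end

section
/- Periodic boundary matching for B-spline transformations (Theorem 2): Let k ≥ 3, r + k ≤ s, α = {α_j}_{j=r-k+1}^{s-1} and t = {t_j}_{j=r-k+1}^{s+k-1} strictly increasing, and f(x) = Σ_j α_j B_{j,k,t}(x). If α_{s-i} = 1 + α_{r-i} for i = 1, ..., k-1 and t_{s+j} = 1 + t_{r+j} for j = -k+2, ..., k-2, then all derivatives of f of orders m = 1, ..., k-2 agree at the endpoints: f^{(m)}(t_r) = f^{(m)}(t_s). -/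
open Filter Topology

theorem hasDerivAt_of_eventually_hasDerivAt_of_ne {E : Type*} [NormedAddCommGroup E]
    [NormedSpace ℝ E] {f g : ℝ → E} {x : ℝ} (hderiv : ∀ᶠ y in 𝓝[≠] x, HasDerivAt f (g y) y)
    (hf : ContinuousAt f x) (hg : ContinuousAt g x) : HasDerivAt f (g x) x := by
  set s := {y | HasDerivAt f (g y) y}
  have hdiff : DifferentiableOn ℝ f s := fun y hy => hy.differentiableAt.differentiableWithinAt
  have hlim : ∀ l ≤ 𝓝 x, s ∈ l → Tendsto (deriv f) l (𝓝 (g x)) := fun l hl hs =>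
    (hg.tendsto.mono_left hl).congr' (mem_of_superset hs fun y hy => hy.deriv.symm)
  have hlt : s ∈ 𝓝[<] x := nhdsWithin_mono _ (fun y hy => ne_of_lt hy) hderiv
  have hgt : s ∈ 𝓝[>] x := nhdsWithin_mono _ (fun y hy => ne_of_gt hy) hderiv
  simpa using
    (hasDerivWithinAt_Iic_of_tendsto_deriv hdiff hf.continuousWithinAt hlt
      (hlim _ nhdsWithin_le_nhds hlt)).union
    (hasDerivWithinAt_Ici_of_tendsto_deriv hdiff hf.continuousWithinAt hgt
      (hlim _ nhdsWithin_le_nhds hgt))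

theorem Finset.sum_Icc_by_parts {R : Type*} [Ring R] {A B : ℤ} {γ c : ℤ → R} (hA : γ (A - 1) = 0)
    (hB : γ B = 0) :
    ∑ j ∈ Finset.Icc A B, γ j * (c j - c (j + 1))
      = ∑ j ∈ Finset.Icc A B, (γ j - γ (j - 1)) * c j := by
  have hshift : ∑ j ∈ Finset.Icc A B, γ (j - 1) * c j
      = ∑ j ∈ Finset.Icc (A - 1) (B - 1), γ j * c (j + 1) := by
    rw [show Finset.Icc A B = (Finset.Icc (A - 1) (B - 1)).map (addRightEmbedding 1) by
      simp [Finset.map_add_right_Icc], Finset.sum_map]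
    simp
  have hleft : ∑ j ∈ Finset.Icc A B, γ j * c (j + 1)
      = ∑ j ∈ Finset.Icc (A - 1) B, γ j * c (j + 1) :=
    Finset.sum_subset (Finset.Icc_subset_Icc (by omega) le_rfl) fun j hj hj' => by
      rw [show j = A - 1 by simp only [Finset.mem_Icc] at hj hj'; omega, hA, zero_mul]
  have hright : ∑ j ∈ Finset.Icc (A - 1) (B - 1), γ j * c (j + 1)
      = ∑ j ∈ Finset.Icc (A - 1) B, γ j * c (j + 1) :=
    Finset.sum_subset (Finset.Icc_subset_Icc le_rfl (by omega)) fun j hj hj' => by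
      rw [show j = B by simp only [Finset.mem_Icc] at hj hj'; omega, hB, zero_mul]
  simp only [mul_sub, sub_mul, Finset.sum_sub_distrib, hshift, hleft, hright]

theorem Finset.sum_Icc_mul_eq_of_eqOn {R : Type*} [Semiring R] {A B C : ℤ} {α β f : ℤ → R}
    (hCB : C ≤ B) (hαβ : ∀ j ∈ Finset.Icc A C, α j = β j) (hβ : ∀ j ∉ Finset.Icc A C, β j = 0) :
    ∑ j ∈ Finset.Icc A C, α j * f j = ∑ j ∈ Finset.Icc A B, β j * f j :=
  (Finset.sum_congr rfl fun j hj => by rw [hαβ j hj]).trans <|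
    Finset.sum_subset (Finset.Icc_subset_Icc le_rfl hCB) fun j _ hj => by rw [hβ j hj, zero_mul]

theorem eventually_mem_iff_of_notMem_frontier {X : Type*} [TopologicalSpace X] {s : Set X}
    {x : X} (hx : x ∉ frontier s) : ∀ᶠ y in 𝓝 x, (y ∈ s ↔ x ∈ s) := by
  rw [← Set.mem_compl_iff, compl_frontier_eq_union_interior] at hx
  rcases hx with hx | hx
  · filter_upwards [mem_interior_iff_mem_nhds.mp hx] with y hy
    exact iff_of_true hy (interior_subset hx)
  · filter_upwards [mem_interior_iff_mem_nhds.mp hx] with y hy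
    exact iff_of_false hy (interior_subset hx)

section BSpline

variable {t : ℤ → ℝ}

theorem bspl_succ_succ (p : ℕ) (j : ℤ) (x : ℝ) :
    Bspl t (p + 2) j x = (x - t j) / (t (j + p + 1) - t j) * Bspl t (p + 1) j x
      + (t (j + p + 2) - x) / (t (j + p + 2) - t (j + 1)) * Bspl t (p + 1) (j + 1) x :=
  rfl

theorem bspl_eq_zero_of_lt (ht : Monotone t) :
    ∀ (n : ℕ) {j : ℤ} {x : ℝ}, x < t j → Bspl t n j x = 0
  | 0, _, _, _ => rfl
  | 1, _, _, h => if_neg fun hx => (h.trans_le hx.1).false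
  | n + 2, j, x, h => by
    rw [bspl_succ_succ, bspl_eq_zero_of_lt ht (n + 1) h,
      bspl_eq_zero_of_lt ht (n + 1) (h.trans_le (ht (by omega)))]
    ring

theorem bspl_eq_zero_of_le (ht : Monotone t) :
    ∀ (n : ℕ) {j : ℤ} {x : ℝ}, t (j + n) ≤ x → Bspl t n j x = 0
  | 0, _, _, _ => rfl
  | 1, _, _, h => if_neg fun hx => (hx.2.trans_le (by simpa using h)).false
  | n + 2, j, x, h => by
    rw [bspl_succ_succ, bspl_eq_zero_of_le ht (n + 1) ((ht (by omega)).trans h),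
      bspl_eq_zero_of_le ht (n + 1) ((ht (by push_cast; omega)).trans h)]
    ring

theorem bspl_self_left (ht : StrictMono t) (n : ℕ) (j : ℤ) : Bspl t (n + 2) j (t j) = 0 := by
  rw [bspl_succ_succ, bspl_eq_zero_of_lt ht.monotone (n + 1) (ht (lt_add_one j))]
  ring

theorem bspl_knot_eq_zero (ht : StrictMono t) {p : ℕ} (hp : 2 ≤ p) {i j : ℤ}
    (hj : j ∉ Finset.Icc (i - p + 1) (i - 1)) : Bspl t p j (t i) = 0 := by
  rw [Finset.mem_Icc, not_and_or, not_le, not_le] at hj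
  obtain ⟨n, rfl⟩ : ∃ n, p = n + 2 := ⟨p - 2, by omega⟩
  rcases hj with hj | hj
  · exact bspl_eq_zero_of_le ht.monotone _ (ht.monotone (by omega))
  · obtain hij | rfl := (Int.add_one_le_iff.mpr hj).lt_or_eq
    · exact bspl_eq_zero_of_lt ht.monotone _ (ht (by omega))
    · simpa using bspl_self_left ht n i

theorem bspl_add_of_knots_add {d : ℤ} {c : ℝ} :
    ∀ (n : ℕ) (j : ℤ), (∀ i ∈ Finset.Icc j (j + n), t (i + d) = t i + c) →
      ∀ x, Bspl t n (j + d) (x + c) = Bspl t n j x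
  | 0, _, _, _ => rfl
  | 1, j, h, x => by
    have h0 := h j (by simp)
    have h1 := h (j + 1) (by simp)
    simp only [Bspl, add_right_comm j d, h0, h1, add_le_add_iff_right, add_lt_add_iff_right]
  | n + 2, j, h, x => by
    have hshift (a : ℤ) (ha : 0 ≤ a ∧ a ≤ n + 2) : t (j + d + a) = t (j + a) + c := by
      rw [add_right_comm]; exact h _ (by simp only [Finset.mem_Icc]; push_cast; omega)
    have h1 := hshift 1 (by omega)
    have hn1 := hshift (n + 1) (by omega)
    have hn2 := hshift (n + 2) (by omega)
    simp only [← add_assoc] at hn1 hn2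
    have hsub (j' : ℤ) (hj' : j ≤ j' ∧ j' ≤ j + 1) :
        ∀ i ∈ Finset.Icc j' (j' + (n + 1 : ℕ)), t (i + d) = t i + c := fun i hi =>
      h i (by simp only [Finset.mem_Icc] at hi ⊢; push_cast at hi ⊢; omega)
    have h0 : t (j + d) = t j + c := by simpa using hshift 0 (by omega)
    rw [bspl_succ_succ, bspl_succ_succ, hn1, hn2, h1, h0,
      bspl_add_of_knots_add (n + 1) j (hsub j (by omega)), add_right_comm j d,
      bspl_add_of_knots_add (n + 1) (j + 1) (hsub (j + 1) (by omega))]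
    ring_nf

theorem bspl_two_eq_max_min (ht : StrictMono t) (j : ℤ) (x : ℝ) :
    Bspl t 2 j x = max 0 (min ((x - t j) / (t (j + 1) - t j))
      ((t (j + 2) - x) / (t (j + 2) - t (j + 1)))) := by
  have hab : t j < t (j + 1) := ht (by omega)
  have hbc : t (j + 1) < t (j + 2) := ht (by omega)
  have hu0 : 0 < t (j + 1) - t j := by linarith
  have hv0 : 0 < t (j + 2) - t (j + 1) := by linarith
  rw [bspl_succ_succ]
  simp only [Bspl, Nat.cast_zero, add_zero, add_assoc, one_add_one_eq_two]
  split_ifs with h1 h2 h2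
  · linarith [h1.2, h2.1]
  · rw [min_eq_left, max_eq_right]
    · ring
    · exact div_nonneg (by linarith [h1.1]) hu0.le
    · rw [div_le_div_iff₀ hu0 hv0]; nlinarith [h1.1, h1.2]
  · rw [min_eq_right, max_eq_right]
    · ring
    · exact div_nonneg (by linarith [h2.2]) hv0.le
    · rw [div_le_div_iff₀ hv0 hu0]; nlinarith [h2.1, h2.2]
  · rw [max_eq_left]
    · ring
    · by_cases hx : x < t j
      · exact (min_le_left _ _).trans (div_nonpos_of_nonpos_of_nonneg (by linarith) hu0.le)
      · refine (min_le_right _ _).trans (div_nonpos_of_nonpos_of_nonneg ?_ hv0.le)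
        by_contra! hx'
        by_cases hxb : x < t (j + 1)
        · exact h1 ⟨not_lt.mp hx, hxb⟩
        · exact h2 ⟨not_lt.mp hxb, sub_pos.mp hx'⟩

theorem continuous_bspl (ht : StrictMono t) : ∀ (n : ℕ) (j : ℤ), Continuous (Bspl t (n + 2) j)
  | 0, j => by
    simp only [funext (bspl_two_eq_max_min ht j)]
    fun_prop
  | n + 1, j => by
    simp only [funext (bspl_succ_succ (t := t) (n + 1) j)]
    have := continuous_bspl ht n j
    have := continuous_bspl ht n (j + 1)
    fun_prop

noncomputable def bsplDeriv (t : ℤ → ℝ) (p : ℕ) (j : ℤ) (x : ℝ) : ℝ :=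
  p / (t (j + p) - t j) * Bspl t p j x - p / (t (j + p + 1) - t (j + 1)) * Bspl t p (j + 1) x

theorem bsplDeriv_succ (ht : StrictMono t) (p : ℕ) (j : ℤ) (x : ℝ) :
    bsplDeriv t (p + 1) j x
      = 1 / (t (j + p + 1) - t j) * Bspl t (p + 1) j x
        + (x - t j) / (t (j + p + 1) - t j) * bsplDeriv t p j x
        + (-1 / (t (j + p + 2) - t (j + 1)) * Bspl t (p + 1) (j + 1) x
        + (t (j + p + 2) - x) / (t (j + p + 2) - t (j + 1)) * bsplDeriv t p (j + 1) x) := by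
  rcases p with _ | q
  · simp only [bsplDeriv]
    push_cast
    ring_nf
  · have hpos (a b : ℤ) (h : a < b) : t b - t a ≠ 0 := sub_ne_zero.mpr (ht h).ne'
    simp only [bsplDeriv, bspl_succ_succ]
    push_cast
    have h1 := hpos j (1 + j + q) (by omega)
    have h2 := hpos j (2 + j + q) (by omega)
    have h3 := hpos (1 + j) (2 + j + q) (by omega)
    have h4 := hpos (1 + j) (3 + j + q) (by omega)
    have h5 := hpos (2 + j) (3 + j + q) (by omega)
    -- one normal form for the knot indices, so that `field_simp` sees the nonzero denominators
    ring_nf at h1 h2 h3 h4 h5 ⊢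
    field_simp
    ring

theorem bspl_one_eventuallyEq (ht : StrictMono t) {j : ℤ} {x : ℝ} (hj : x ≠ t j)
    (hj' : x ≠ t (j + 1)) : Bspl t 1 j =ᶠ[𝓝 x] fun _ => Bspl t 1 j x := by
  have hx : x ∉ frontier (Set.Ico (t j) (t (j + 1))) := by
    rw [frontier_Ico (ht (lt_add_one j))]
    simp [hj, hj']
  filter_upwards [eventually_mem_iff_of_notMem_frontier hx] with y hy
  exact if_congr hy rfl rfl

theorem hasDerivAt_bspl_of_notMem (ht : StrictMono t) :
    ∀ (p : ℕ) (j : ℤ) {x : ℝ}, x ∉ (Finset.Icc j (j + p + 1)).image t →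
      HasDerivAt (Bspl t (p + 1) j) (bsplDeriv t p j x) x
  | 0, j, x, hx => by
    simp only [Finset.mem_image, Finset.mem_Icc, not_exists, not_and] at hx
    have hderiv := (hasDerivAt_const x (Bspl t 1 j x)).congr_of_eventuallyEq
      (bspl_one_eventuallyEq ht (fun h => hx j (by omega) h.symm)
        (fun h => hx (j + 1) (by omega) h.symm))
    simpa [bsplDeriv] using hderiv
  | p + 1, j, x, hx => by
    have hsub (j' : ℤ) (hj' : j ≤ j' ∧ j' ≤ j + 1) :
        x ∉ (Finset.Icc j' (j' + p + 1)).image t := fun hmem => hx <|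
      Finset.image_subset_image (Finset.Icc_subset_Icc hj'.1 (by push_cast; omega)) hmem
    have hu : HasDerivAt (fun y => (y - t j) / (t (j + p + 1) - t j))
        (1 / (t (j + p + 1) - t j)) x :=
      ((hasDerivAt_id x).sub_const _).div_const _
    have hv : HasDerivAt (fun y => (t (j + p + 2) - y) / (t (j + p + 2) - t (j + 1)))
        (-1 / (t (j + p + 2) - t (j + 1))) x :=
      ((hasDerivAt_id x).const_sub _).div_const _
    rw [bsplDeriv_succ ht]
    exact (hu.fun_mul (hasDerivAt_bspl_of_notMem ht p j (hsub j (by omega)))).fun_add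
      (hv.fun_mul (hasDerivAt_bspl_of_notMem ht p (j + 1) (hsub (j + 1) (by omega))))

theorem continuous_bsplDeriv (ht : StrictMono t) (n : ℕ) (j : ℤ) :
    Continuous (bsplDeriv t (n + 2) j) := by
  have := continuous_bspl ht n j
  have := continuous_bspl ht n (j + 1)
  unfold bsplDeriv
  fun_prop

theorem hasDerivAt_bspl (ht : StrictMono t) {p : ℕ} (hp : 2 ≤ p) (j : ℤ) (x : ℝ) :
    HasDerivAt (Bspl t (p + 1) j) (bsplDeriv t p j x) x := by
  obtain ⟨n, rfl⟩ : ∃ n, p = n + 2 := ⟨p - 2, by omega⟩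
  refine hasDerivAt_of_eventually_hasDerivAt_of_ne ?_ (continuous_bspl ht (n + 1) j).continuousAt
    (continuous_bsplDeriv ht n j).continuousAt
  filter_upwards [nhdsNE_of_nhdsNE_sdiff_finite self_mem_nhdsWithin
    ((Finset.Icc j (j + (n + 2 : ℕ) + 1)).image t).finite_toSet] with y hy
  exact hasDerivAt_bspl_of_notMem ht (n + 2) j hy.2

noncomputable def derivCoeff (t : ℤ → ℝ) (p : ℕ) (γ : ℤ → ℝ) (j : ℤ) : ℝ :=
  p * (γ j - γ (j - 1)) / (t (j + p) - t j)

theorem hasDerivAt_sum_bspl (ht : StrictMono t) {p : ℕ} (hp : 2 ≤ p) {A B : ℤ} {γ : ℤ → ℝ}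
    (hA : γ (A - 1) = 0) (hB : γ B = 0) (x : ℝ) :
    HasDerivAt (fun y => ∑ j ∈ Finset.Icc A B, γ j * Bspl t (p + 1) j y)
      (∑ j ∈ Finset.Icc A B, derivCoeff t p γ j * Bspl t p j x) x := by
  refine (HasDerivAt.fun_sum fun j _ => (hasDerivAt_bspl ht hp j x).const_mul (γ j)).congr_deriv ?_
  have hsplit (j : ℤ) : bsplDeriv t p j x = p / (t (j + p) - t j) * Bspl t p j x
      - p / (t (j + 1 + p) - t (j + 1)) * Bspl t p (j + 1) x := by
    rw [bsplDeriv, add_right_comm j 1]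
  have hshift := Finset.sum_Icc_by_parts
    (c := fun j => p / (t (j + p) - t j) * Bspl t p j x) hA hB
  simp only [hsplit, hshift]
  refine Finset.sum_congr rfl fun j _ => ?_
  rw [derivCoeff]
  ring

/-- `iterDerivCoeff t k α m` is the paper's `α^{(m+1)}`: the coefficients of the `m`-th derivative
of `∑ α_j B_{j,k}` in the B-splines of order `k - m`. -/
noncomputable def iterDerivCoeff (t : ℤ → ℝ) (k : ℕ) (α : ℤ → ℝ) : ℕ → ℤ → ℝ
  | 0 => α
  | m + 1 => derivCoeff t (k - (m + 1)) (iterDerivCoeff t k α m)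

theorem iterDerivCoeff_eq_zero {k : ℕ} {α : ℤ → ℝ} {A C : ℤ}
    (hα : ∀ j ∉ Finset.Icc A C, α j = 0) :
    ∀ (m : ℕ), ∀ j ∉ Finset.Icc A (C + m), iterDerivCoeff t k α m j = 0
  | 0, j, hj => hα j (by simpa using hj)
  | m + 1, j, hj => by
    simp only [Finset.mem_Icc, not_and_or, not_le] at hj
    rw [iterDerivCoeff, derivCoeff, iterDerivCoeff_eq_zero hα m j,
      iterDerivCoeff_eq_zero hα m (j - 1)]
    · simp
    all_goals simp only [Finset.mem_Icc]; push_cast at hj; omega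

theorem iteratedDeriv_sum_bspl (ht : StrictMono t) {k : ℕ} {A B C : ℤ} {α : ℤ → ℝ}
    (hα : ∀ j ∉ Finset.Icc A C, α j = 0) :
    ∀ m : ℕ, m + 2 ≤ k → C + m ≤ B →
      iteratedDeriv m (fun x => ∑ j ∈ Finset.Icc A B, α j * Bspl t k j x)
        = fun x => ∑ j ∈ Finset.Icc A B, iterDerivCoeff t k α m j * Bspl t (k - m) j x
  | 0, _, _ => rfl
  | m + 1, hk, hB => by
    rw [iteratedDeriv_succ, iteratedDeriv_sum_bspl ht hα m (by omega) (by omega),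
      show k - m = k - (m + 1) + 1 by omega]
    funext x
    refine (hasDerivAt_sum_bspl ht (by omega) ?_ ?_ x).deriv
    all_goals exact iterDerivCoeff_eq_zero hα m _ (by simp only [Finset.mem_Icc]; omega)

theorem derivCoeff_add_period {p : ℕ} {γ : ℤ → ℝ} {c e : ℝ} {a b d : ℤ}
    (hγ : ∀ j ∈ Finset.Icc (a - 1) b, γ (j + d) = γ j + c)
    (htt : ∀ j ∈ Finset.Icc a (b + p), t (j + d) = t j + e) :
    ∀ j ∈ Finset.Icc a b, derivCoeff t p γ (j + d) = derivCoeff t p γ j := by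
  intro j hj
  simp only [Finset.mem_Icc] at hj
  have h0 := hγ j (by simp only [Finset.mem_Icc]; omega)
  have h1 := hγ (j - 1) (by simp only [Finset.mem_Icc]; omega)
  have t0 := htt j (by simp only [Finset.mem_Icc]; omega)
  have tp := htt (j + p) (by simp only [Finset.mem_Icc]; omega)
  rw [derivCoeff, derivCoeff, ← sub_add_eq_add_sub, add_right_comm j d, h0, h1, t0, tp]
  ring_nf

theorem iterDerivCoeff_add_period {k : ℕ} {α : ℤ → ℝ} {c e : ℝ} {r d : ℤ}
    (hα : ∀ j ∈ Finset.Icc (r - k + 1) (r - 1), α (j + d) = α j + c)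
    (htt : ∀ j ∈ Finset.Icc (r - k + 2) (r + k - 2), t (j + d) = t j + e) :
    ∀ m : ℕ, ∀ j ∈ Finset.Icc (r - k + m + 2) (r - 1),
      iterDerivCoeff t k α (m + 1) (j + d) = iterDerivCoeff t k α (m + 1) j
  | 0 => derivCoeff_add_period
      (fun j hj => hα j (by simp only [Finset.mem_Icc] at hj ⊢; omega))
      (fun j hj => htt j (by simp only [Finset.mem_Icc] at hj ⊢; omega))
  | m + 1 => derivCoeff_add_period (c := 0)
      (fun j hj => by
        rw [add_zero]
        exact iterDerivCoeff_add_period hα htt m j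
          (by simp only [Finset.mem_Icc] at hj ⊢; push_cast at hj; omega))
      (fun j hj => htt j (by simp only [Finset.mem_Icc] at hj ⊢; omega))

theorem sum_bspl_knot (ht : StrictMono t) {p : ℕ} (hp : 2 ≤ p) {A B i : ℤ}
    (hA : A ≤ i - p + 1) (hB : i - 1 ≤ B) (c : ℤ → ℝ) :
    ∑ j ∈ Finset.Icc A B, c j * Bspl t p j (t i)
      = ∑ j ∈ Finset.Icc (i - p + 1) (i - 1), c j * Bspl t p j (t i) :=
  (Finset.sum_subset (Finset.Icc_subset_Icc hA hB) fun j _ hj => by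
    rw [bspl_knot_eq_zero ht hp hj, mul_zero]).symm

theorem sum_bspl_knot_add_period {p : ℕ} (hp : 2 ≤ p) {i d : ℤ} {e : ℝ}
    {c : ℤ → ℝ} (hc : ∀ j ∈ Finset.Icc (i - p + 1) (i - 1), c (j + d) = c j)
    (htt : ∀ j ∈ Finset.Icc (i - p + 1) (i + p - 1), t (j + d) = t j + e) :
    ∑ j ∈ Finset.Icc (i + d - p + 1) (i + d - 1), c j * Bspl t p j (t (i + d))
      = ∑ j ∈ Finset.Icc (i - p + 1) (i - 1), c j * Bspl t p j (t i) := by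
  rw [show Finset.Icc (i + d - p + 1) (i + d - 1)
      = (Finset.Icc (i - p + 1) (i - 1)).map (addRightEmbedding d) by
    rw [Finset.map_add_right_Icc]; congr 1 <;> ring, Finset.sum_map,
    htt i (by simp only [Finset.mem_Icc]; omega)]
  refine Finset.sum_congr rfl fun j hj => ?_
  simp only [Finset.mem_Icc] at hj
  rw [addRightEmbedding_apply, hc j (by simp only [Finset.mem_Icc]; omega),
    bspl_add_of_knots_add p j (fun a ha => htt a (by simp only [Finset.mem_Icc] at ha ⊢; omega))]

theorem iteratedDeriv_sum_bspl_knot_add_period (ht : StrictMono t) {k m : ℕ} (hmk : m + 3 ≤ k)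
    {r d B C : ℤ} {c e : ℝ} {α : ℤ → ℝ} (hd : 0 ≤ d) (hB : C + m + 1 ≤ B) (hrB : r + d ≤ B + 1)
    (hα : ∀ j ∉ Finset.Icc (r - k + 1) C, α j = 0)
    (hαper : ∀ j ∈ Finset.Icc (r - k + 1) (r - 1), α (j + d) = α j + c)
    (htt : ∀ j ∈ Finset.Icc (r - k + 2) (r + k - 2), t (j + d) = t j + e) :
    iteratedDeriv (m + 1) (fun x => ∑ j ∈ Finset.Icc (r - k + 1) B, α j * Bspl t k j x) (t r)
      = iteratedDeriv (m + 1)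
          (fun x => ∑ j ∈ Finset.Icc (r - k + 1) B, α j * Bspl t k j x) (t (r + d)) := by
  rw [iteratedDeriv_sum_bspl ht hα (m + 1) (by omega) (by omega)]
  dsimp only
  rw [sum_bspl_knot ht (by omega) (i := r) (by omega) (by omega),
    sum_bspl_knot ht (by omega) (i := r + d) (by omega) (by omega),
    sum_bspl_knot_add_period (by omega)
      (fun j hj => iterDerivCoeff_add_period hαper htt m j
        (by simp only [Finset.mem_Icc] at hj ⊢; omega))
      (fun j hj => htt j (by simp only [Finset.mem_Icc] at hj ⊢; omega))]

end BSpline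

theorem stmt11_general (t : ℤ → ℝ) (ht : StrictMono t) (k : ℕ) (r s : ℤ)
    (hrs : r + (k : ℤ) ≤ s) (α : ℤ → ℝ)
    (hα : ∀ i ∈ Finset.Icc (1 : ℤ) ((k : ℤ) - 1), α (s - i) = 1 + α (r - i))
    (htt : ∀ j ∈ Finset.Icc (-(k : ℤ) + 2) ((k : ℤ) - 2), t (s + j) = 1 + t (r + j)) :
    ∀ m : ℕ, 1 ≤ m → m ≤ k - 2 →
      iteratedDeriv m (fun x => ∑ j ∈ Finset.Icc (r - (k : ℤ) + 1) (s - 1),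
          α j * Bspl t k j x) (t r)
        = iteratedDeriv m (fun x => ∑ j ∈ Finset.Icc (r - (k : ℤ) + 1) (s - 1),
          α j * Bspl t k j x) (t s) := by
  intro m hm1 hm2
  obtain ⟨d, rfl⟩ : ∃ d, s = r + d := ⟨s - r, by ring⟩
  obtain ⟨m, rfl⟩ : ∃ m', m = m' + 1 := ⟨m - 1, by omega⟩
  set β : ℤ → ℝ := fun j => if j ∈ Finset.Icc (r - k + 1) (r + d - 1) then α j else 0
  have hβ : ∀ j ∉ Finset.Icc (r - k + 1) (r + d - 1), β j = 0 := fun j hj => if_neg hj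
  have hβper : ∀ j ∈ Finset.Icc (r - k + 1) (r - 1), β (j + d) = β j + 1 := by
    intro j hj
    simp only [Finset.mem_Icc] at hj
    have := hα (r - j) (by simp only [Finset.mem_Icc]; omega)
    simp only [β, Finset.mem_Icc]
    rw [if_pos (by omega), if_pos (by omega), show j + d = r + d - (r - j) by ring, this]
    ring_nf
  have hknots : ∀ j ∈ Finset.Icc (r - k + 2) (r + k - 2), t (j + d) = t j + 1 := by
    intro j hj
    simp only [Finset.mem_Icc] at hj
    have := htt (j - r) (by simp only [Finset.mem_Icc]; omega)
    rw [show j + d = r + d + (j - r) by ring, this, add_sub_cancel, add_comm]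
  have hextend (x : ℝ) := Finset.sum_Icc_mul_eq_of_eqOn (f := fun j => Bspl t k j x)
    (β := β) (B := r + d - 1 + k) (by omega) (fun j hj => (if_pos hj).symm) hβ
  simp only [hextend]
  exact iteratedDeriv_sum_bspl_knot_add_period ht (by omega) (by omega) (by omega) (by omega) hβ
    hβper hknots

/-- Periodic boundary matching: if the coefficients and knots satisfy the unit-shift
conditions, then the derivatives of orders `1, …, k-2` of the B-spline curve agree at
the endpoints `t r` and `t s`. -/
theorem stmt11 (t : ℤ → ℝ) (ht : StrictMono t) (k : ℕ) (hk : 3 ≤ k) (r s : ℤ)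
    (hrs : r + (k : ℤ) ≤ s) (α : ℤ → ℝ)
    (hα : ∀ i ∈ Finset.Icc (1 : ℤ) ((k : ℤ) - 1), α (s - i) = 1 + α (r - i))
    (htt : ∀ j ∈ Finset.Icc (-(k : ℤ) + 2) ((k : ℤ) - 2), t (s + j) = 1 + t (r + j)) :
    ∀ m : ℕ, 1 ≤ m → m ≤ k - 2 →
      iteratedDeriv m (fun x => ∑ j ∈ Finset.Icc (r - (k : ℤ) + 1) (s - 1),
          α j * Bspl t k j x) (t r)
        = iteratedDeriv m (fun x => ∑ j ∈ Finset.Icc (r - (k : ℤ) + 1) (s - 1),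
          α j * Bspl t k j x) (t s) :=
  stmt11_general t ht k r s hrs α hα htt
end
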